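/- If J is a nonempty closed subset of S^F, then 𝒜 = ⋂J (the intersection ⋂{p̃ : p̃ ∈ J} of the z-filters corresponding to the points of J) is a pure z-filter on F, and bar(𝒜) = J. -/

import Mathlib

open Set Topology WeakDual BoundedContinuousFunction

noncomputable section

variable (S : Type*) [TopologicalSpace S] [T2Space S] [Semigroup S]

/-- Left translation `λ_s`, as a continuous map, given continuity of left translations. -/
def lamC (hl : ∀ s : S, Continuous (fun t => s * t)) (s : S) : C(S, S) :=
  ⟨fun t => s * t, hl s⟩

/-- An m-admissible subalgebra of `CB(S) = S →ᵇ ℂ`. -/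
structure MAdmissible (hl : ∀ s : S, Continuous (fun t => s * t)) : Type _ where
  carrier : StarSubalgebra ℂ (S →ᵇ ℂ)
  isClosed' : IsClosed (carrier : Set (S →ᵇ ℂ))
  leftInvariant : ∀ (s : S), ∀ f ∈ carrier, f.compContinuous (lamC S hl s) ∈ carrier
  mAdmissible : ∀ (μ : characterSpace ℂ carrier) (f : S →ᵇ ℂ) (hf : f ∈ carrier),
    ∃ g ∈ carrier, ∀ s : S,
      g s = μ ⟨f.compContinuous (lamC S hl s), leftInvariant s f hf⟩

variable {hl : ∀ s : S, Continuous (fun t => s * t)}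

/-- The spectrum `S^F` of an m-admissible subalgebra. -/
abbrev specF (F : MAdmissible S hl) : Type _ := characterSpace ℂ F.carrier

/-- Evaluation at a point, as an algebra homomorphism on `F`. -/
def evalHom (F : MAdmissible S hl) (s : S) : F.carrier →ₐ[ℂ] ℂ where
  toFun f := (f : S →ᵇ ℂ) s
  map_one' := rfl
  map_mul' _ _ := rfl
  map_zero' := rfl
  map_add' _ _ := rfl
  commutes' _ := rfl

/-- The evaluation map `ε : S → S^F`. -/
def epsF (F : MAdmissible S hl) (s : S) : specF S F :=
  haveI : CompleteSpace F.carrier := F.isClosed'.completeSpace_coe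
  CharacterSpace.equivAlgHom.symm (evalHom S F s)

variable (F : MAdmissible S hl)

/-- `Z(F)`: the collection of zero sets of members of `F`. -/
def ZSet : Set (Set S) := {A | ∃ f ∈ F.carrier, A = {s : S | f s = 0}}

/-- z-filters on `F`. -/
def IsZFilter (𝒜 : Set (Set S)) : Prop :=
  𝒜 ⊆ ZSet S F ∧ ∅ ∉ 𝒜 ∧ Set.univ ∈ 𝒜 ∧
    (∀ A ∈ 𝒜, ∀ B ∈ 𝒜, A ∩ B ∈ 𝒜) ∧
    ∀ A ∈ 𝒜, ∀ B ∈ ZSet S F, A ⊆ B → B ∈ 𝒜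

/-- `FS`: the collection of z-ultrafilters on `F`. -/
def zUltra : Set (Set (Set S)) :=
  {p | IsZFilter S F p ∧ ∀ q, IsZFilter S F q → p ⊆ q → q = p}

/-- `cl ε(A)` in `S^F`. -/
def epsCl (A : Set S) : Set (specF S F) := closure (epsF S F '' A)

/-- `⋂_{A ∈ p} cl ε(A)`; for `p ∈ FS` this is the singleton of the corresponding point of `S^F`. -/
def core (p : Set (Set S)) : Set (specF S F) := ⋂ A ∈ p, epsCl S F A

/-- `p̃ = ⋂ [p]`, the intersection of the equivalence class of `p`. -/
def tilde (p : Set (Set S)) : Set (Set S) :=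
  ⋂₀ {q | q ∈ zUltra S F ∧ core S F q = core S F p}

/-- pure z-filters. -/
def IsPure (𝒜 : Set (Set S)) : Prop :=
  IsZFilter S F 𝒜 ∧ ∀ p ∈ zUltra S F, 𝒜 ⊆ p → 𝒜 ⊆ tilde S F p

/-- `bar(𝒜) = {p̃ : 𝒜 ⊆ p}`, viewed as a subset of `S^F` via the identification of
`p̃` with the point `μ` such that `⋂_{A ∈ p} cl ε(A) = {μ}`. -/
def barSet (𝒜 : Set (Set S)) : Set (specF S F) :=
  {μ | ∃ p ∈ zUltra S F, 𝒜 ⊆ p ∧ core S F p = {μ}}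

/-- `𝒜° = {A ∈ 𝒜 : bar(𝒜) ⊆ int cl ε(A)}`. -/
def circA (𝒜 : Set (Set S)) : Set (Set S) :=
  {A ∈ 𝒜 | barSet S F 𝒜 ⊆ interior (epsCl S F A)}

/-- `⋂ J`, the intersection of the z-filters `p̃` corresponding to points of `J ⊆ S^F`. -/
def interOf (J : Set (specF S F)) : Set (Set S) :=
  ⋂₀ {C | ∃ p ∈ zUltra S F, ∃ μ ∈ J, core S F p = {μ} ∧ C = tilde S F p}

/-- `⋂ [p̃]_R` for a relation `r` on `S^F`. -/
def classInter (r : specF S F → specF S F → Prop) (μ : specF S F) : Set (Set S) :=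
  interOf S F {ν | r μ ν}

/-- `Ω_ℬ(A) = {x ∈ S : λ_x⁻¹(A) ∈ ℬ}`. -/
def OmegaZ (ℬ : Set (Set S)) (A : Set S) : Set S := {x : S | (fun t => x * t) ⁻¹' A ∈ ℬ}

/-- `𝒜 + ℬ`. -/
def zsum (𝒜 ℬ : Set (Set S)) : Set (Set S) :=
  {A ∈ ZSet S F | ∀ F' ∈ ZSet S F, OmegaZ S ℬ A ⊆ F' → F' ∈ 𝒜}

/-- `𝒜 ⊙ ℬ = ⋂ bar(𝒜 + ℬ)`. -/
def odot (𝒜 ℬ : Set (Set S)) : Set (Set S) :=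
  interOf S F (barSet S F (zsum S F 𝒜 ℬ))

/-- topological choice functions for a set `Γ` of z-filters. -/
def IsTCF (Γ : Set (Set (Set S))) (f : Set (Set S) → Set S) : Prop :=
  ∀ L ∈ Γ, f L ∈ L ∧ barSet S F L ⊆ interior (epsCl S F (f L))

/-- `A* = {𝓛 ∈ Γ : bar(𝓛) ∩ cl ε(A) ≠ ∅}`. -/
def starSet (Γ : Set (Set (Set S))) (A : Set S) : Set Γ :=
  {L : Γ | (barSet S F (L : Set (Set S)) ∩ epsCl S F A).Nonempty}

/-- `A_* = {𝓛 ∈ Γ : bar(𝓛) ⊆ cl ε(A)}`. -/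
def lowStar (Γ : Set (Set (Set S))) (A : Set S) : Set Γ :=
  {L : Γ | barSet S F (L : Set (Set S)) ⊆ epsCl S F A}

/-- The `τ*` quotient topology on `Γ`. -/
def tauStar (Γ : Set (Set (Set S))) : TopologicalSpace Γ :=
  TopologicalSpace.generateFrom {U | ∃ A ∈ ZSet S F, U = (starSet S F Γ A)ᶜ}

/-- The `τ_*` quotient topology on `Γ`. -/
def tauLow (Γ : Set (Set (Set S))) : TopologicalSpace Γ :=
  TopologicalSpace.generateFrom {U | ∃ A ∈ ZSet S F, U = (lowStar S F Γ A)ᶜ}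

/-- `Γ` is a quotient of `S^F`: conditions (a) and (b) of Theorem 3.9. -/
def IsQuotientOf (Γ : Set (Set (Set S))) : Prop :=
  (∀ L ∈ Γ, IsPure S F L) ∧
  (∀ f : Set (Set S) → Set S, IsTCF S F Γ f →
    ∃ 𝓕 : Finset (Set (Set S)), ↑𝓕 ⊆ Γ ∧
      (Set.univ : Set (specF S F)) = ⋃ L ∈ 𝓕, interior (epsCl S F (f L))) ∧
  (∀ L ∈ Γ, ∀ K ∈ Γ, L ≠ K →
    ∃ A ∈ circA S F L, ∃ B ∈ circA S F K, ∀ C ∈ Γ,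
      (∀ H ∈ ZSet S F, (interior (epsCl S F A))ᶜ ⊆ interior (epsCl S F H) → H ∈ C) ∨
      (∀ T ∈ ZSet S F, (interior (epsCl S F B))ᶜ ⊆ interior (epsCl S F T) → T ∈ C))

/-- The defining property of the map `γ : S^F → Γ` sending `p̃` to the unique member of `Γ`
contained in `p̃`. -/
def IsGamma (Γ : Set (Set (Set S))) (γ : specF S F → Γ) : Prop :=
  ∀ (μ : specF S F) (p : Set (Set S)), p ∈ zUltra S F → core S F p = {μ} →
    (γ μ : Set (Set S)) ⊆ tilde S F p

/-- The defining property of the multiplication of `S^F`: `(μν)(f) = μ(T_ν f)` where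
`(T_ν f)(s) = ν(L_s f)`. -/
def IsSpecMul (mul : specF S F → specF S F → specF S F) : Prop :=
  ∀ (μ ν : specF S F) (f : S →ᵇ ℂ) (hf : f ∈ F.carrier) (g : S →ᵇ ℂ) (hg : g ∈ F.carrier),
    (∀ s : S, g s = ν ⟨f.compContinuous (lamC S hl s), F.leftInvariant s f hf⟩) →
    mul μ ν ⟨f, hf⟩ = μ ⟨g, hg⟩

/-- `LMC(S)`, as a subset of `CB(S)`. -/
def LMCset (hl : ∀ s : S, Continuous (fun t => s * t)) : Set (S →ᵇ ℂ) :=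
  {f | ∀ μ : characterSpace ℂ (S →ᵇ ℂ),
    Continuous fun s : S => μ (f.compContinuous (lamC S hl s))}

end

/-!
Via the Gelfand isomorphism `F ≅ C(S^F)`, the `ε`-preimage of the zero set of any continuous
function on the compact Hausdorff space `S^F` is a zero set of `F`. Hence Urysohn's lemma gives,
for disjoint closed `L, K ⊆ S^F`, a zero set `Z` containing the `ε`-preimage of a neighbourhood
of `L` and with `cl ε(Z)` disjoint from `K`; such a `Z` lies in every z-ultrafilter whose point is
in `L`. With `L = J` and `K = {μ}` for `μ ∉ J`, this `Z` lies in `⋂J` but in no z-ultrafilter with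
point `μ`, so `bar(⋂J) ⊆ J`. The reverse inclusion holds for any `J`, and purity follows because
every z-ultrafilter `p ⊇ ⋂J` then has its point in `J`, so `⋂J ⊆ p̃` by the definition of `⋂J`.
-/

instance MAdmissible.isClosed_carrier {S : Type*} [TopologicalSpace S] [Semigroup S]
    {hl : ∀ s : S, Continuous (fun t => s * t)} (F : MAdmissible S hl) :
    IsClosed (F.carrier : Set (S →ᵇ ℂ)) :=
  F.isClosed'

section ZFilters

variable {S : Type*} [TopologicalSpace S] [Semigroup S]
  {hl : ∀ s : S, Continuous (fun t => s * t)} {F : MAdmissible S hl}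

theorem epsF_apply (s : S) (f : F.carrier) : epsF S F s f = (f : S →ᵇ ℂ) s := rfl

theorem exists_forall_apply_eq (φ : C(specF S F, ℂ)) :
    ∃ f : F.carrier, ∀ μ : specF S F, μ f = φ μ := by
  obtain ⟨f, hf⟩ := (gelfandTransform_bijective (A := F.carrier)).2 φ
  exact ⟨f, fun μ => by rw [← hf]; rfl⟩

theorem denseRange_epsF : DenseRange (epsF S F) := by
  by_contra h
  obtain ⟨μ, hμ⟩ := not_forall.mp h
  obtain ⟨φ, hφ0, hφ1, -⟩ := exists_continuous_zero_one_of_isClosed isClosed_closure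
    isClosed_singleton (disjoint_singleton_right.mpr hμ)
  obtain ⟨f, hf⟩ := exists_forall_apply_eq (F := F) ⟨fun x => (φ x : ℂ), by fun_prop⟩
  have hf0 : f = 0 := Subtype.ext <| BoundedContinuousFunction.ext fun s => by
    rw [← epsF_apply, hf]
    simp [hφ0 (subset_closure (mem_range_self s))]
  simpa [hf0, hφ1 rfl] using hf μ

theorem setOf_comp_epsF_eq_zero_mem_ZSet (ψ : C(specF S F, ℝ)) :
    {s : S | ψ (epsF S F s) = 0} ∈ ZSet S F := by
  obtain ⟨f, hf⟩ := exists_forall_apply_eq (F := F) ⟨fun x => (ψ x : ℂ), by fun_prop⟩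
  refine ⟨f, f.2, ?_⟩
  ext s
  rw [mem_ofPred_eq, mem_ofPred_eq, ← epsF_apply, hf]
  exact Complex.ofReal_eq_zero.symm

theorem univ_mem_ZSet : (univ : Set S) ∈ ZSet S F :=
  ⟨0, zero_mem _, by ext; simp⟩

theorem inter_mem_ZSet {A B : Set S} (hA : A ∈ ZSet S F) (hB : B ∈ ZSet S F) :
    A ∩ B ∈ ZSet S F := by
  obtain ⟨f, hf, rfl⟩ := hA
  obtain ⟨g, hg, rfl⟩ := hB
  refine ⟨star f * f + star g * g,
    add_mem (mul_mem (star_mem hf) hf) (mul_mem (star_mem hg) hg), ?_⟩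
  ext s
  have hsum : (star f * f + star g * g) s = ((‖f s‖ ^ 2 + ‖g s‖ ^ 2 : ℝ) : ℂ) := by
    simp [Complex.conj_mul']
  rw [mem_ofPred_eq, hsum, Complex.ofReal_eq_zero,
    add_eq_zero_iff_of_nonneg (by positivity) (by positivity)]
  simp

theorem isZFilter_sInter {𝒮 : Set (Set (Set S))} (hne : 𝒮.Nonempty)
    (h : ∀ C ∈ 𝒮, IsZFilter S F C) : IsZFilter S F (⋂₀ 𝒮) := by
  obtain ⟨C₀, hC₀⟩ := hne
  exact ⟨fun A hA => (h C₀ hC₀).1 (hA C₀ hC₀), fun he => (h C₀ hC₀).2.1 (he C₀ hC₀),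
    fun C hC => (h C hC).2.2.1,
    fun A hA B hB C hC => (h C hC).2.2.2.1 A (hA C hC) B (hB C hC),
    fun A hA B hB hAB C hC => (h C hC).2.2.2.2 A (hA C hC) B hB hAB⟩

theorem isZFilter_setOf_mem_ZSet_and_mem (f : Filter S) [f.NeBot] :
    IsZFilter S F {B | B ∈ ZSet S F ∧ B ∈ f} :=
  ⟨fun _ hB => hB.1, fun h => Filter.empty_notMem f h.2, ⟨univ_mem_ZSet, Filter.univ_mem⟩,
    fun _ hA _ hB => ⟨inter_mem_ZSet hA.1 hB.1, Filter.inter_mem hA.2 hB.2⟩,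
    fun _ hA _ hB hAB => ⟨hB, Filter.mem_of_superset hA.2 hAB⟩⟩

theorem isZFilter_sUnion {c : Set (Set (Set S))} (hc : ∀ q ∈ c, IsZFilter S F q)
    (hchain : IsChain (· ⊆ ·) c) (hne : c.Nonempty) : IsZFilter S F (⋃₀ c) := by
  obtain ⟨q₀, hq₀⟩ := hne
  refine ⟨?_, ?_, ⟨q₀, hq₀, (hc q₀ hq₀).2.2.1⟩, ?_, ?_⟩
  · rintro A ⟨q, hq, hAq⟩
    exact (hc q hq).1 hAq
  · rintro ⟨q, hq, hq'⟩
    exact (hc q hq).2.1 hq'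
  · rintro A ⟨q₁, hq₁, hA⟩ B ⟨q₂, hq₂, hB⟩
    rcases hchain.total hq₁ hq₂ with h₁₂ | h₂₁
    · exact ⟨q₂, hq₂, (hc q₂ hq₂).2.2.2.1 A (h₁₂ hA) B hB⟩
    · exact ⟨q₁, hq₁, (hc q₁ hq₁).2.2.2.1 A hA B (h₂₁ hB)⟩
  · rintro A ⟨q, hq, hA⟩ B hB hAB
    exact ⟨q, hq, (hc q hq).2.2.2.2 A hA B hB hAB⟩

theorem exists_zUltra_superset {p : Set (Set S)} (hp : IsZFilter S F p) :
    ∃ q ∈ zUltra S F, p ⊆ q := by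
  obtain ⟨m, hpm, hm⟩ := zorn_subset_nonempty {q | IsZFilter S F q}
    (fun c hc hchain hne => ⟨⋃₀ c, isZFilter_sUnion hc hchain hne, fun _ => subset_sUnion_of_mem⟩)
    p hp
  exact ⟨m, ⟨hm.prop, fun q hq hmq => (hm.eq_of_subset hq hmq).symm⟩, hpm⟩

theorem mem_zUltra_of_forall_inter_nonempty {p : Set (Set S)} (hp : p ∈ zUltra S F)
    {Z : Set S} (hZ : Z ∈ ZSet S F) (h : ∀ A ∈ p, (Z ∩ A).Nonempty) : Z ∈ p := by
  let q : Set (Set S) := {B | B ∈ ZSet S F ∧ ∃ A ∈ p, Z ∩ A ⊆ B}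
  have hq : IsZFilter S F q := by
    refine ⟨fun B hB => hB.1, ?_, ⟨univ_mem_ZSet, univ, hp.1.2.2.1, subset_univ _⟩, ?_, ?_⟩
    · rintro ⟨-, A, hA, hsub⟩
      exact (h A hA).ne_empty (subset_empty_iff.mp hsub)
    · rintro B₁ ⟨hB₁, A₁, hA₁, hs₁⟩ B₂ ⟨hB₂, A₂, hA₂, hs₂⟩
      exact ⟨inter_mem_ZSet hB₁ hB₂, A₁ ∩ A₂, hp.1.2.2.2.1 A₁ hA₁ A₂ hA₂,
        fun x hx => ⟨hs₁ ⟨hx.1, hx.2.1⟩, hs₂ ⟨hx.1, hx.2.2⟩⟩⟩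
    · rintro B₁ ⟨-, A, hA, hs⟩ B₂ hB₂ hB₁₂
      exact ⟨hB₂, A, hA, hs.trans hB₁₂⟩
  rw [← hp.2 q hq fun A hA => ⟨hp.1.1 hA, A, hA, inter_subset_right⟩]
  exact ⟨hZ, univ, hp.1.2.2.1, inter_subset_left⟩

theorem IsZFilter.nonempty_of_mem {p : Set (Set S)} (hp : IsZFilter S F p) {A : Set S}
    (hA : A ∈ p) : A.Nonempty :=
  nonempty_iff_ne_empty.mpr fun h => hp.2.1 (h ▸ hA)

theorem mem_zUltra_of_mem_comap_nhds {p : Set (Set S)} (hp : p ∈ zUltra S F) {ν : specF S F}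
    (hν : ν ∈ core S F p) {Z : Set S} (hZ : Z ∈ ZSet S F)
    (hZν : Z ∈ Filter.comap (epsF S F) (𝓝 ν)) : Z ∈ p := by
  obtain ⟨U, hU, hUZ⟩ := hZν
  refine mem_zUltra_of_forall_inter_nonempty hp hZ fun A hA => ?_
  obtain ⟨_, hsU, s, hsA, rfl⟩ := mem_closure_iff_nhds.mp (mem_iInter₂.mp hν A hA) U hU
  exact ⟨s, hUZ hsU, hsA⟩

theorem exists_mem_ZSet_separating {L K : Set (specF S F)} (hL : IsClosed L) (hK : IsClosed K)
    (hLK : Disjoint L K) :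
    ∃ Z ∈ ZSet S F, Z ∈ Filter.comap (epsF S F) (𝓝ˢ L) ∧ Disjoint (epsCl S F Z) K := by
  obtain ⟨φ, hφK, hφL, -⟩ := exists_continuous_zero_one_of_isClosed hK hL hLK.symm
  let ψ : C(specF S F, ℝ) := ⟨fun x => max (1 / 2 - φ x) 0, by fun_prop⟩
  have hψ : ∀ x, ψ x = 0 ↔ 1 / 2 ≤ φ x := fun x => by simp [ψ]
  refine ⟨{s | ψ (epsF S F s) = 0}, setOf_comp_epsF_eq_zero_mem_ZSet ψ, ⟨{x | 1 / 2 < φ x},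
    (isOpen_lt continuous_const φ.continuous).mem_nhdsSet.mpr fun x hx => ?_,
    fun s hs => (hψ _).mpr (le_of_lt hs)⟩, ?_⟩
  · norm_num [hφL hx]
  · have hcl : epsCl S F {s | ψ (epsF S F s) = 0} ⊆ {x | ψ x = 0} :=
      closure_minimal (image_preimage_subset (epsF S F) {x | ψ x = 0})
        (isClosed_eq ψ.continuous continuous_const)
    refine disjoint_left.mpr fun x hxZ hxK => ?_
    have := (hψ x).mp (hcl hxZ)
    norm_num [hφK hxK] at this

theorem core_nonempty {p : Set (Set S)} (hp : p ∈ zUltra S F) : (core S F p).Nonempty := by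
  have : Nonempty p := ⟨⟨univ, hp.1.2.2.1⟩⟩
  have hdir : Directed (· ⊇ ·) fun A : p => epsCl S F A := fun A B =>
    ⟨⟨A ∩ B, hp.1.2.2.2.1 _ A.2 _ B.2⟩, closure_mono (image_mono inter_subset_left),
      closure_mono (image_mono inter_subset_right)⟩
  simpa only [core, biInter_eq_iInter] using
    IsCompact.nonempty_iInter_of_directed_nonempty_isCompact_isClosed _ hdir
      (fun A => ((hp.1.nonempty_of_mem A.2).image _).closure)
      (fun _ => isClosed_closure.isCompact) (fun _ => isClosed_closure)

theorem core_subsingleton {p : Set (Set S)} (hp : p ∈ zUltra S F) :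
    (core S F p).Subsingleton := by
  intro ν hν μ hμ
  by_contra hne
  obtain ⟨Z, hZ, hZν, hdisj⟩ := exists_mem_ZSet_separating isClosed_singleton isClosed_singleton
    (disjoint_singleton.mpr hne)
  rw [nhdsSet_singleton] at hZν
  exact hdisj.ne_of_mem (mem_iInter₂.mp hμ Z (mem_zUltra_of_mem_comap_nhds hp hν hZ hZν))
    rfl rfl

theorem exists_core_eq_singleton {p : Set (Set S)} (hp : p ∈ zUltra S F) :
    ∃ μ, core S F p = {μ} :=
  let ⟨μ, hμ⟩ := core_nonempty hp
  ⟨μ, (core_subsingleton hp).eq_singleton_of_mem hμ⟩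

theorem exists_zUltra_core_eq_singleton (μ : specF S F) :
    ∃ p ∈ zUltra S F, core S F p = {μ} := by
  have : (Filter.comap (epsF S F) (𝓝 μ)).NeBot := Filter.comap_neBot_iff.mpr fun U hU =>
    let ⟨_, hxU, s, hs⟩ := mem_closure_iff_nhds.mp (denseRange_epsF μ) U hU
    ⟨s, hs ▸ hxU⟩
  obtain ⟨p, hp, hsub⟩ := exists_zUltra_superset
    (isZFilter_setOf_mem_ZSet_and_mem (F := F) (Filter.comap (epsF S F) (𝓝 μ)))
  have hμ : μ ∈ core S F p := mem_iInter₂.mpr fun A hA => by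
    by_contra hμA
    obtain ⟨Z, hZ, hZμ, hdisj⟩ := exists_mem_ZSet_separating isClosed_singleton isClosed_closure
      (disjoint_singleton_left.mpr hμA)
    rw [nhdsSet_singleton] at hZμ
    obtain ⟨s, hsA, hsZ⟩ := hp.1.nonempty_of_mem (hp.1.2.2.2.1 A hA Z (hsub ⟨hZ, hZμ⟩))
    exact hdisj.ne_of_mem (subset_closure (mem_image_of_mem _ hsZ))
      (subset_closure (mem_image_of_mem _ hsA)) rfl
  exact ⟨p, hp, (core_subsingleton hp).eq_singleton_of_mem hμ⟩

theorem tilde_isZFilter {p : Set (Set S)} (hp : p ∈ zUltra S F) :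
    IsZFilter S F (tilde S F p) :=
  isZFilter_sInter ⟨p, hp, rfl⟩ fun _ hq => hq.1.1

theorem tilde_subset {p : Set (Set S)} (hp : p ∈ zUltra S F) : tilde S F p ⊆ p :=
  sInter_subset_of_mem ⟨hp, rfl⟩

theorem interOf_isZFilter {J : Set (specF S F)} (hJ : J.Nonempty) :
    IsZFilter S F (interOf S F J) := by
  obtain ⟨μ, hμJ⟩ := hJ
  obtain ⟨p, hp, hμ⟩ := exists_zUltra_core_eq_singleton μ
  exact isZFilter_sInter ⟨_, p, hp, μ, hμJ, hμ, rfl⟩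
    fun _ ⟨q, hq, _, _, _, hC⟩ => hC ▸ tilde_isZFilter hq

theorem subset_barSet_interOf (J : Set (specF S F)) : J ⊆ barSet S F (interOf S F J) := by
  intro μ hμJ
  obtain ⟨p, hp, hμ⟩ := exists_zUltra_core_eq_singleton μ
  exact ⟨p, hp, fun A hA => tilde_subset hp (hA _ ⟨p, hp, μ, hμJ, hμ, rfl⟩), hμ⟩

theorem barSet_interOf_subset {J : Set (specF S F)} (hJ : IsClosed J) :
    barSet S F (interOf S F J) ⊆ J := by
  rintro μ ⟨q, hq, hJq, hμ⟩
  by_contra hμJ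
  obtain ⟨Z, hZ, hZJ, hdisj⟩ := exists_mem_ZSet_separating hJ isClosed_singleton
    (disjoint_singleton_right.mpr hμJ)
  have hZmem : Z ∈ interOf S F J := by
    rintro _ ⟨p, -, ν, hνJ, hν, rfl⟩ r ⟨hr, hrp⟩
    exact mem_zUltra_of_mem_comap_nhds hr (hrp.trans hν ▸ rfl) hZ
      (Filter.comap_mono (nhds_le_nhdsSet hνJ) hZJ)
  exact hdisj.ne_of_mem (mem_iInter₂.mp (hμ ▸ rfl : μ ∈ core S F q) Z (hJq hZmem)) rfl rfl

end ZFilters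

variable (S : Type*) [TopologicalSpace S] [T2Space S] [Semigroup S]

variable {hl : ∀ s : S, Continuous (fun t => s * t)}

variable (F : MAdmissible S hl)

theorem statement13
    (J : Set (specF S F)) (hJc : IsClosed J) (hJne : J.Nonempty) :
    IsPure S F (interOf S F J) ∧ barSet S F (interOf S F J) = J := by
  have hbar : barSet S F (interOf S F J) = J :=
    (barSet_interOf_subset hJc).antisymm (subset_barSet_interOf J)
  refine ⟨⟨interOf_isZFilter hJne, fun q hq hJq => ?_⟩, hbar⟩
  obtain ⟨μ, hμ⟩ := exists_core_eq_singleton hq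
  exact sInter_subset_of_mem ⟨q, hq, μ, hbar ▸ ⟨q, hq, hJq, hμ⟩, hμ, rfl⟩
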